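/- arXiv:1705.02112 — 6 statements merged into one kernel-verified Lean document; each statement's English description precedes it below -/
import Mathlib

section
/- Let a, b, c > 0 be real numbers with ϱ = b/√(ac) > 1, and let L : [0,∞) → ℝ be continuously differentiable and satisfy (DI). If λ is any real number with λ₋ < λ < λ₊ and L(0) ≤ λ, then L(t) ≤ λ for every t ≥ 0 (i.e. sup_{t≥0} L(t) ≤ λ). -/
/-! Wherever `L` touches the level `λ`, (DI) gives `L' ≤ a λ² - 2 b λ + c`, which is negative
because `λ` lies strictly between the roots of this quadratic; so `L` can never cross `λ` upwards. -/

open Set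

theorem le_of_hasDerivAt_of_deriv_neg_at_level {L L' : ℝ → ℝ} {x₀ lam : ℝ}
    (hderiv : ∀ t ∈ Ici x₀, HasDerivAt L (L' t) t) (h₀ : L x₀ ≤ lam)
    (hlevel : ∀ t ∈ Ici x₀, L t = lam → L' t < 0) :
    ∀ t ∈ Ici x₀, L t ≤ lam := fun _ ht =>
  image_le_of_deriv_right_lt_deriv_boundary (B' := fun _ => 0)
    (fun x hx => (hderiv x hx.1).continuousAt.continuousWithinAt)
    (fun x hx => (hderiv x hx.1).hasDerivWithinAt) h₀
    (fun x => hasDerivAt_const x lam) (fun x hx hLx => hlevel x hx.1 hLx)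
    ⟨ht, le_rfl⟩

-- The two bounds on `lam` are the roots `λ₋, λ₊` of `a x² - 2 b x + c`.
theorem quadratic_neg_of_between_roots {a b c ϱ lam : ℝ} (ha : 0 < a) (hc : 0 < c)
    (hϱdef : ϱ = b / Real.sqrt (a * c)) (hϱ : 1 ≤ ϱ ^ 2)
    (hlow : Real.sqrt (c / a) * (ϱ - Real.sqrt (ϱ ^ 2 - 1)) < lam)
    (hhigh : lam < Real.sqrt (c / a) * (ϱ + Real.sqrt (ϱ ^ 2 - 1))) :
    c + a * lam ^ 2 - 2 * b * lam < 0 := by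
  have hsϱ : a * (Real.sqrt (c / a) * ϱ) = b := by
    have : 0 < Real.sqrt c := Real.sqrt_pos.2 hc
    have hsqrt_a : Real.sqrt a * Real.sqrt a = a := Real.mul_self_sqrt ha.le
    rw [hϱdef, Real.sqrt_div hc.le, Real.sqrt_mul ha.le]
    field_simp
    linear_combination -b * hsqrt_a
  set s := Real.sqrt (c / a)
  set r := Real.sqrt (ϱ ^ 2 - 1)
  have hs : a * s ^ 2 = c := by rw [Real.sq_sqrt (by positivity)]; field_simp
  have hr : r ^ 2 = ϱ ^ 2 - 1 := Real.sq_sqrt (by linarith)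
  have hfactor : c + a * lam ^ 2 - 2 * b * lam = a * (lam - s * (ϱ - r)) * (lam - s * (ϱ + r)) := by
    linear_combination -hs + 2 * lam * hsϱ + a * s ^ 2 * hr
  rw [hfactor]
  exact mul_neg_of_pos_of_neg (mul_pos ha (sub_pos.2 hlow)) (sub_neg.2 hhigh)

theorem stmt0_general (a b c : ℝ) (ha : 0 < a) (hc : 0 < c)
    (ϱ : ℝ) (hϱdef : ϱ = b / Real.sqrt (a * c)) (hϱ : 1 < ϱ)
    (L L' : ℝ → ℝ)
    (hderiv : ∀ t ∈ Set.Ici (0 : ℝ), HasDerivAt L (L' t) t)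
    (hDI : ∀ t ∈ Set.Ici (0 : ℝ), L' t + 2 * b * L t ≤ c + a * (L t) ^ 2)
    (lam : ℝ)
    (hlow : Real.sqrt (c / a) * (ϱ - Real.sqrt (ϱ ^ 2 - 1)) < lam)
    (hhigh : lam < Real.sqrt (c / a) * (ϱ + Real.sqrt (ϱ ^ 2 - 1)))
    (h0 : L 0 ≤ lam) :
    ∀ t ∈ Set.Ici (0 : ℝ), L t ≤ lam := by
  have hquad : c + a * lam ^ 2 - 2 * b * lam < 0 :=
    quadratic_neg_of_between_roots ha hc hϱdef (by nlinarith) hlow hhigh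
  refine le_of_hasDerivAt_of_deriv_neg_at_level hderiv h0 fun t ht hLt => ?_
  have := hDI t ht
  rw [hLt] at this
  linarith

/-- If `L` is continuously differentiable on `[0,∞)` and satisfies the
differential inequality (DI) `L' t + 2*b*L t ≤ c + a*(L t)^2`, with `ϱ = b/√(ac) > 1`,
then `L 0 ≤ λ` with `λ₋ < λ < λ₊` implies `L t ≤ λ` for all `t ≥ 0`. -/
theorem stmt0 (a b c : ℝ) (ha : 0 < a) (hb : 0 < b) (hc : 0 < c)
    (ϱ : ℝ) (hϱdef : ϱ = b / Real.sqrt (a * c)) (hϱ : 1 < ϱ)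
    (L L' : ℝ → ℝ)
    (hderiv : ∀ t ∈ Set.Ici (0 : ℝ), HasDerivAt L (L' t) t)
    (hcont : ContinuousOn L' (Set.Ici 0))
    (hDI : ∀ t ∈ Set.Ici (0 : ℝ), L' t + 2 * b * L t ≤ c + a * (L t) ^ 2)
    (lam : ℝ)
    (hlow : Real.sqrt (c / a) * (ϱ - Real.sqrt (ϱ ^ 2 - 1)) < lam)
    (hhigh : lam < Real.sqrt (c / a) * (ϱ + Real.sqrt (ϱ ^ 2 - 1)))
    (h0 : L 0 ≤ lam) :
    ∀ t ∈ Set.Ici (0 : ℝ), L t ≤ lam :=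
  stmt0_general a b c ha hc ϱ hϱdef hϱ L L' hderiv hDI lam hlow hhigh h0
end

section
/- For every ϱ > 1 there exists a time t_ϱ > 0, depending only on ϱ, with the following property: for all real numbers a, b, c > 0 with b/√(ac) = ϱ and every continuously differentiable L : [0,∞) → ℝ satisfying (DI), if L(0) ≤ √(c/a)·(2ϱ−1), then L(t) ≤ √(c/a)·(1/(2ϱ−1)) for every t ≥ t_ϱ/√(ac). -/
set_option maxHeartbeats 2000000 in
/-- For every `ϱ > 1` there is a time `tϱ > 0` depending only on `ϱ` such
that any continuously differentiable solution of (DI) with `b/√(ac) = ϱ` and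
`L 0 ≤ √(c/a)*(2ϱ-1)` satisfies `L t ≤ √(c/a)*(1/(2ϱ-1))` for all `t ≥ tϱ/√(ac)`. -/
theorem stmt1 :
    ∀ ϱ : ℝ, 1 < ϱ → ∃ tϱ : ℝ, 0 < tϱ ∧
      ∀ a b c : ℝ, 0 < a → 0 < b → 0 < c →
        b / Real.sqrt (a * c) = ϱ →
        ∀ L L' : ℝ → ℝ,
          (∀ t ∈ Set.Ici (0 : ℝ), HasDerivAt L (L' t) t) →
          ContinuousOn L' (Set.Ici 0) →
          (∀ t ∈ Set.Ici (0 : ℝ), L' t + 2 * b * L t ≤ c + a * (L t) ^ 2) →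
          L 0 ≤ Real.sqrt (c / a) * (2 * ϱ - 1) →
          ∀ t : ℝ, tϱ / Real.sqrt (a * c) ≤ t →
            L t ≤ Real.sqrt (c / a) * (1 / (2 * ϱ - 1)) := by
  intro ϱ hϱ
  set r : ℝ := Real.sqrt (ϱ ^ 2 - 1) with hrdef
  have hϱ0 : (0:ℝ) < ϱ := by linarith
  have h2ϱ : (1:ℝ) < 2 * ϱ - 1 := by linarith
  have h2ϱ0 : (0:ℝ) < 2 * ϱ - 1 := by linarith
  have hr2 : r ^ 2 = ϱ ^ 2 - 1 := Real.sq_sqrt (by nlinarith)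
  have hrϱ : ϱ - 1 < r := by
    have h1 : (ϱ - 1) ^ 2 < ϱ ^ 2 - 1 := by nlinarith
    nlinarith [Real.sqrt_nonneg (ϱ ^ 2 - 1), hr2]
  have hrpos : 0 < r := by linarith
  have hprod : (ϱ - r) * (ϱ + r) = 1 := by nlinarith [hr2]
  set g1 : ℝ := 1 / (2 * ϱ - 1) - ϱ + r with hg1def
  set g2 : ℝ := r - ϱ + 1 with hg2def
  have hg2 : 0 < g2 := by simp only [hg2def]; linarith
  have hg1 : 0 < g1 := by
    have hϱr : ϱ - r = 1 / (ϱ + r) := by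
      field_simp
      linarith [hprod]
    have : 1 / (ϱ + r) < 1 / (2 * ϱ - 1) := by
      apply one_div_lt_one_div_of_lt h2ϱ0
      linarith
    simp only [hg1def]; linarith [hϱr ▸ this]
  set K : ℝ := (2 * ϱ - 1) - 1 / (2 * ϱ - 1) with hKdef
  have hK : 0 < K := by
    have : 1 / (2 * ϱ - 1) < 1 := by
      rw [div_lt_one h2ϱ0]; linarith
    simp only [hKdef]; linarith
  clear_value r g1 g2 K
  refine ⟨2 * K / (g1 * g2), by positivity, ?_⟩
  intro a b c ha hb hc hbac L L' hL hLc hDI hL0 t ht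
  set s : ℝ := Real.sqrt (a * c) with hsdef
  set μ : ℝ := Real.sqrt (c / a) with hμdef
  have hs : 0 < s := Real.sqrt_pos.2 (by positivity)
  have hμ : 0 < μ := Real.sqrt_pos.2 (by positivity)
  have hbs : b = ϱ * s := by
    field_simp at hbac
    linarith [hbac]
  have hμs : μ * s = c := by
    rw [hμdef, hsdef, ← Real.sqrt_mul (by positivity) _]
    rw [show c / a * (a * c) = c ^ 2 by field_simp]
    exact Real.sqrt_sq hc.le
  have hs2 : s ^ 2 = a * c := Real.sq_sqrt (by positivity)
  have haμ : a * μ = s := by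
    have h : a * μ * s = s * s := by
      rw [mul_assoc, hμs]; nlinarith [hs2]
    exact mul_right_cancel₀ hs.ne' h
  have haμ2 : a * μ ^ 2 = c := by
    have : a * μ ^ 2 = (a * μ) * μ := by ring
    rw [this, haμ, mul_comm, hμs]
  clear_value s μ
  -- key quadratic bound
  have key : ∀ x : ℝ, μ / (2 * ϱ - 1) ≤ x → x ≤ μ * (2 * ϱ - 1) →
      c + a * x ^ 2 - 2 * b * x ≤ -(c * (g1 * g2)) := by
    intro x hx1 hx2
    have hfact : c + a * x ^ 2 - 2 * b * x
        = a * ((x - μ * (ϱ - r)) * (x - μ * (ϱ + r))) := by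
      have e1 : a * ((x - μ * (ϱ - r)) * (x - μ * (ϱ + r)))
          = a * x ^ 2 - 2 * (a * μ) * ϱ * x + (a * μ ^ 2) * ((ϱ - r) * (ϱ + r)) := by
        ring
      rw [e1, haμ, haμ2, hprod, hbs]; ring
    have hp : μ * g1 ≤ x - μ * (ϱ - r) := by
      have : μ / (2 * ϱ - 1) - μ * (ϱ - r) = μ * g1 := by
        simp only [hg1def]; field_simp; ring
      linarith [this]
    have hq : μ * g2 ≤ μ * (ϱ + r) - x := by
      have : μ * (ϱ + r) - μ * (2 * ϱ - 1) = μ * g2 := by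
        simp only [hg2def]; ring
      linarith [this]
    have hpq : (μ * g1) * (μ * g2) ≤ (x - μ * (ϱ - r)) * (μ * (ϱ + r) - x) :=
      mul_le_mul hp hq (by positivity) (le_trans (by positivity) hp)
    have h2 : a * ((μ * g1) * (μ * g2)) ≤ a * ((x - μ * (ϱ - r)) * (μ * (ϱ + r) - x)) :=
      mul_le_mul_of_nonneg_left hpq ha.le
    have h3 : a * ((μ * g1) * (μ * g2)) = c * (g1 * g2) := by
      rw [show a * ((μ * g1) * (μ * g2)) = (a * μ ^ 2) * (g1 * g2) by ring, haμ2]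
    have h4 : a * ((x - μ * (ϱ - r)) * (x - μ * (ϱ + r)))
        = -(a * ((x - μ * (ϱ - r)) * (μ * (ϱ + r) - x))) := by ring
    rw [hfact, h4]
    linarith [h2, h3]
  set δ : ℝ := c * (g1 * g2) with hδdef
  have hδ : 0 < δ := by positivity
  set T : ℝ := 2 * K / (g1 * g2) / s with hTdef
  have hT0 : 0 ≤ T := by positivity
  -- value of barrier at T
  have hBT : μ * (2 * ϱ - 1) - δ / 2 * T = μ / (2 * ϱ - 1) := by
    have hcs : c = μ * s := hμs.symm
    simp only [hTdef, hδdef, hKdef, hcs]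
    field_simp
    ring
  have key' : ∀ x : ℝ, μ / (2 * ϱ - 1) ≤ x → x ≤ μ * (2 * ϱ - 1) →
      c + a * x ^ 2 - 2 * b * x ≤ -δ := by
    intro x h1 h2
    rw [hδdef]
    exact key x h1 h2
  have hTt : T ≤ t := by rw [hTdef]; exact ht
  clear_value δ T
  clear key hδdef hTdef
  -- DI rearranged
  have hDI' : ∀ x : ℝ, 0 ≤ x → L' x ≤ c + a * (L x) ^ 2 - 2 * b * L x := by
    intro x hx
    have := hDI x hx
    linarith
  have hcont : ∀ u v : ℝ, 0 ≤ u → ContinuousOn L (Set.Icc u v) := by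
    intro u v hu x hx
    exact (hL x (le_trans hu hx.1)).continuousAt.continuousWithinAt
  have hderiv : ∀ u v : ℝ, 0 ≤ u → ∀ x ∈ Set.Ico u v,
      HasDerivWithinAt L (L' x) (Set.Ici x) x := by
    intro u v hu x hx
    exact (hL x (le_trans hu hx.1)).hasDerivWithinAt
  -- Step 1 : L T ≤ μ / (2ϱ-1)
  have step1 : L T ≤ μ / (2 * ϱ - 1) := by
    have hB : ∀ x : ℝ, HasDerivAt (fun y => μ * (2 * ϱ - 1) - δ / 2 * y) (-(δ / 2)) x := by
      intro x
      simpa using ((hasDerivAt_id x).const_mul (δ / 2)).const_sub (μ * (2 * ϱ - 1))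
    have bound : ∀ x ∈ Set.Ico (0:ℝ) T,
        L x = (fun y => μ * (2 * ϱ - 1) - δ / 2 * y) x → L' x < -(δ / 2) := by
      intro x hx hLx0
      have hLx : L x = μ * (2 * ϱ - 1) - δ / 2 * x := hLx0
      have hx0 : (0:ℝ) ≤ x := hx.1
      have hxT : x < T := hx.2
      have hδx : 0 ≤ δ / 2 * x := by positivity
      have hup : L x ≤ μ * (2 * ϱ - 1) := by rw [hLx]; linarith
      have hlo : μ / (2 * ϱ - 1) ≤ L x := by
        rw [hLx]
        have h5 : δ / 2 * x ≤ δ / 2 * T := by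
          apply mul_le_mul_of_nonneg_left hxT.le (by positivity)
        linarith [hBT]
      have h1 := key' (L x) hlo hup
      have h2 := hDI' x hx0
      linarith
    have H := image_le_of_deriv_right_lt_deriv_boundary (f := L) (f' := L')
      (a := 0) (b := T) (hcont 0 T le_rfl) (hderiv 0 T le_rfl)
      (B := fun y => μ * (2 * ϱ - 1) - δ / 2 * y) (B' := fun _ => -(δ / 2))
      (by simpa using hL0) hB bound (Set.right_mem_Icc.2 hT0)
    calc L T ≤ μ * (2 * ϱ - 1) - δ / 2 * T := H
      _ = μ / (2 * ϱ - 1) := hBT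
  -- Step 2 : constant barrier for t ≥ T
  have step2 : L t ≤ μ / (2 * ϱ - 1) := by
    have hB : ∀ x : ℝ, HasDerivAt (fun _ : ℝ => μ / (2 * ϱ - 1)) (0:ℝ) x := fun x =>
      hasDerivAt_const x _
    have bound : ∀ x ∈ Set.Ico T t,
        L x = (fun _ : ℝ => μ / (2 * ϱ - 1)) x → L' x < 0 := by
      intro x hx hLx0
      have hLx : L x = μ / (2 * ϱ - 1) := hLx0
      have hx0 : (0:ℝ) ≤ x := le_trans hT0 hx.1
      have hlo : μ / (2 * ϱ - 1) ≤ L x := le_of_eq hLx.symm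
      have hup : L x ≤ μ * (2 * ϱ - 1) := by
        rw [hLx, div_le_iff₀ h2ϱ0]
        nlinarith [hμ]
      have h1 := key' (L x) hlo hup
      have h2 := hDI' x hx0
      linarith
    exact image_le_of_deriv_right_lt_deriv_boundary (f := L) (f' := L')
      (a := T) (b := t) (hcont T t hT0) (hderiv T t hT0)
      (B := fun _ => μ / (2 * ϱ - 1)) (B' := fun _ => (0:ℝ))
      step1 hB bound (Set.right_mem_Icc.2 hTt)
  calc L t ≤ μ / (2 * ϱ - 1) := step2
    _ = μ * (1 / (2 * ϱ - 1)) := by ring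
end

section
/- Let ϱ > 1 and set r = ϱ + √(ϱ²−1) and t_ϱ = (1/(2ϱ−1−r))·log((r+1−2ϱ)/(4ϱr(ϱ−1)+r+1−2ϱ)). Then for all real numbers a, b, c > 0 with b/√(ac) = ϱ and every continuously differentiable L : [0,∞) → ℝ satisfying (DI) with L(0) ≤ √(c/a)·(2ϱ−1), one has L(t) ≤ √(c/a)·(1/(2ϱ−1)) for every t ≥ t_ϱ/√(ac). -/
/-!
Write `s = √(c/a)`. Since `2ϱr = r² + 1`, the right-hand side of (DI) factors as
`c + aL² - 2bL = a (L - s/r) (L - s r)`, so `L` is a subsolution of a Riccati equation with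
equilibria `λ₋ = s/r < λ₊ = s r`. The level `s (2ϱ - 1)` lies strictly between them, so it is
never crossed from below, and below `λ₊` the ratio `(L - λ₋) / (λ₊ - L)` decays at least like
`exp (-a (λ₊ - λ₋) t)`. It starts at most at `r` and has to reach `r⁻³`, the ratio of the target
level `s / (2ϱ - 1)`; this happens once `exp (a (λ₊ - λ₋) t) ≥ r⁴`, which `t ≥ tϱ / √(ac)` ensures.
-/

open Real Set

namespace Riccati

/-- The ratio which a Riccati equation with equilibria `α < β` turns into an exponential. -/
noncomputable def ratio (α β x : ℝ) : ℝ := (x - α) / (β - x)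

lemma ratio_le_ratio_iff {α β x y : ℝ} (hαβ : α < β) (hx : x < β) (hy : y < β) :
    ratio α β x ≤ ratio α β y ↔ x ≤ y := by
  rw [ratio, ratio, div_le_div_iff₀ (sub_pos.2 hx) (sub_pos.2 hy)]
  constructor <;> intro h <;> nlinarith

lemma hasDerivAt_ratio {α β l' x : ℝ} {L : ℝ → ℝ} (hL : HasDerivAt L l' x) (hx : L x ≠ β) :
    HasDerivAt (fun t => ratio α β (L t)) (l' * (β - α) / (β - L x) ^ 2) x :=
  ((hL.sub_const α).div (hL.const_sub β) (sub_ne_zero.2 hx.symm)).congr_deriv (by ring)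

variable {a α β : ℝ} {L L' : ℝ → ℝ}

lemma le_of_initial_le (ha : 0 < a) (hL : ∀ t ∈ Ici (0 : ℝ), HasDerivAt L (L' t) t)
    (hDI : ∀ t ∈ Ici (0 : ℝ), L' t ≤ a * (L t - α) * (L t - β))
    {B : ℝ} (hB : B ∈ Ioo α β) (h0 : L 0 ≤ B) {t : ℝ} (ht : 0 ≤ t) : L t ≤ B := by
  refine image_le_of_deriv_right_lt_deriv_boundary (B := fun _ => B) (B' := fun _ => 0)
    (fun x hx => (hL x hx.1).continuousAt.continuousWithinAt)
    (fun x hx => (hL x hx.1).hasDerivWithinAt) h0 (fun x => hasDerivAt_const x B) ?_ ⟨ht, le_rfl⟩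
  intro x hx hLx
  have hneg : a * (B - α) * (B - β) < 0 :=
    mul_neg_of_pos_of_neg (mul_pos ha (sub_pos.2 hB.1)) (sub_neg.2 hB.2)
  have := hDI x hx.1
  rw [hLx] at this
  linarith

lemma antitoneOn_exp_mul_ratio (hαβ : α ≤ β) (hL : ∀ t ∈ Ici (0 : ℝ), HasDerivAt L (L' t) t)
    (hDI : ∀ t ∈ Ici (0 : ℝ), L' t ≤ a * (L t - α) * (L t - β))
    (hβ : ∀ t ∈ Ici (0 : ℝ), L t < β) :
    AntitoneOn (fun t => exp (a * (β - α) * t) * ratio α β (L t)) (Ici 0) := by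
  have hg : ∀ t ∈ Ici (0 : ℝ), HasDerivAt (fun t => exp (a * (β - α) * t) * ratio α β (L t))
      (exp (a * (β - α) * t) * (β - α) / (β - L t) ^ 2 * (L' t - a * (L t - α) * (L t - β))) t := by
    intro t ht
    have hβt : β - L t ≠ 0 := (sub_pos.2 (hβ t ht)).ne'
    refine ((((hasDerivAt_id t).const_mul (a * (β - α))).exp).mul
      (hasDerivAt_ratio (α := α) (hL t ht) (hβ t ht).ne)).congr_deriv ?_
    rw [ratio, id]
    field_simp
    ring
  refine antitoneOn_of_hasDerivWithinAt_nonpos (convex_Ici 0)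
    (fun t ht => (hg t ht).continuousAt.continuousWithinAt)
    (fun t ht => (hg t (interior_subset ht)).hasDerivWithinAt) fun t ht => ?_
  replace ht := interior_subset ht
  exact mul_nonpos_of_nonneg_of_nonpos
    (div_nonneg (mul_nonneg (exp_pos _).le (sub_nonneg.2 hαβ)) (sq_nonneg _))
    (sub_nonpos.2 (hDI t ht))

lemma ratio_le_exp_mul_ratio (hαβ : α ≤ β) (hL : ∀ t ∈ Ici (0 : ℝ), HasDerivAt L (L' t) t)
    (hDI : ∀ t ∈ Ici (0 : ℝ), L' t ≤ a * (L t - α) * (L t - β))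
    (hβ : ∀ t ∈ Ici (0 : ℝ), L t < β) {t : ℝ} (ht : 0 ≤ t) :
    ratio α β (L t) ≤ exp (-(a * (β - α) * t)) * ratio α β (L 0) := by
  have h := antitoneOn_exp_mul_ratio hαβ hL hDI hβ self_mem_Ici ht ht
  simp only [mul_zero, exp_zero, one_mul] at h
  rw [exp_neg, ← div_eq_inv_mul, le_div_iff₀ (exp_pos _), mul_comm]
  exact h

end Riccati

open Riccati

lemma one_lt_add_sqrt_sq_sub_one {ϱ : ℝ} (hϱ : 1 < ϱ) : 1 < ϱ + √(ϱ ^ 2 - 1) := by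
  linarith [sqrt_nonneg (ϱ ^ 2 - 1)]

lemma two_mul_mul_add_sqrt_sq_sub_one {ϱ : ℝ} (hϱ : 1 ≤ ϱ ^ 2) :
    2 * ϱ * (ϱ + √(ϱ ^ 2 - 1)) = (ϱ + √(ϱ ^ 2 - 1)) ^ 2 + 1 := by
  linear_combination -sq_sqrt (sub_nonneg.2 hϱ)

/-- The time `tϱ` of the statement, written in terms of `r`. -/
noncomputable def tRho (r : ℝ) : ℝ := r / (r - 1) * log (r * (r ^ 2 - r + 1))

lemma tRho_nonneg {r : ℝ} (hr : 1 < r) : 0 ≤ tRho r :=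
  mul_nonneg (div_nonneg (by linarith) (by linarith)) (log_nonneg (by nlinarith))

lemma tRho_eq {ϱ r : ℝ} (hr : 1 < r) (hϱr : 2 * ϱ * r = r ^ 2 + 1) :
    1 / (2 * ϱ - 1 - r) * log ((r + 1 - 2 * ϱ) / (4 * ϱ * r * (ϱ - 1) + r + 1 - 2 * ϱ))
      = tRho r := by
  have hr1 : r - 1 ≠ 0 := by linarith
  have hnum : r + 1 - 2 * ϱ = (r - 1) / r := by
    field_simp
    linear_combination (-1) * hϱr
  have hden : 4 * ϱ * r * (ϱ - 1) + r + 1 - 2 * ϱ = (r - 1) * (r ^ 2 - r + 1) := by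
    linear_combination (2 * ϱ + r - 2) * hϱr
  have hcoef : 2 * ϱ - 1 - r = -((r - 1) / r) := by
    field_simp
    linear_combination hϱr
  rw [hnum, hden, hcoef, show (r - 1) / r / ((r - 1) * (r ^ 2 - r + 1)) = (r * (r ^ 2 - r + 1))⁻¹
    by field_simp, log_inv, tRho]
  field_simp

lemma pow_four_le_exp_of_tRho_le {r τ : ℝ} (hr : 1 < r) (hτ : tRho r ≤ τ) :
    r ^ 4 ≤ exp ((r - 1 / r) * τ) := by
  have hr0 : 0 < r := by linarith
  have hlog : 2 * log r ≤ log (r * (r ^ 2 - r + 1)) := by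
    rw [show 2 * log r = log (r ^ 2) by rw [log_pow]; norm_num]
    exact log_le_log (by positivity) (by nlinarith [mul_nonneg hr0.le (sq_nonneg (r - 1))])
  have hlogr : 0 ≤ log r := log_nonneg hr.le
  have htRho : (r - 1 / r) * tRho r = (r + 1) * log (r * (r ^ 2 - r + 1)) := by
    have : r - 1 ≠ 0 := by linarith
    rw [tRho]
    field_simp
    ring
  calc r ^ 4
      = exp (4 * log r) := by
        rw [← exp_log (pow_pos hr0 4), log_pow]
        norm_num
    _ ≤ exp ((r - 1 / r) * τ) := by
      have hμ : 0 ≤ r - 1 / r := by rw [sub_nonneg, div_le_iff₀ hr0]; nlinarith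
      refine exp_le_exp.2 ?_
      calc 4 * log r ≤ (r + 1) * log (r * (r ^ 2 - r + 1)) := by nlinarith
        _ = (r - 1 / r) * tRho r := htRho.symm
        _ ≤ (r - 1 / r) * τ := by gcongr

theorem le_of_pow_four_le_exp {a s r ϱ : ℝ} {L L' : ℝ → ℝ} (ha : 0 < a) (hs : 0 < s)
    (hr : 1 < r) (hϱr : 2 * ϱ * r = r ^ 2 + 1)
    (hL : ∀ t ∈ Ici (0 : ℝ), HasDerivAt L (L' t) t)
    (hDI : ∀ t ∈ Ici (0 : ℝ), L' t ≤ a * (L t - s / r) * (L t - s * r))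
    (h0 : L 0 ≤ s * (2 * ϱ - 1)) {t : ℝ} (ht : 0 ≤ t)
    (hexp : r ^ 4 ≤ exp (a * (s * r - s / r) * t)) :
    L t ≤ s * (1 / (2 * ϱ - 1)) := by
  have hr0 : 0 < r := by linarith
  have hlevel : 2 * ϱ - 1 = (r ^ 2 - r + 1) / r := by
    field_simp
    linear_combination hϱr
  rw [hlevel, ← mul_div_assoc] at h0
  rw [hlevel, one_div_div, ← mul_div_assoc]
  have hX : 1 < r ^ 2 - r + 1 := by nlinarith
  have hαβ : s / r < s * r := by rw [div_lt_iff₀ hr0]; nlinarith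
  have hB : s * (r ^ 2 - r + 1) / r ∈ Ioo (s / r) (s * r) := by
    refine ⟨div_lt_div_of_pos_right (lt_mul_of_one_lt_right hs hX) hr0, ?_⟩
    rw [div_lt_iff₀ hr0]
    nlinarith
  have hbelow : ∀ t ∈ Ici (0 : ℝ), L t < s * r :=
    fun t ht => (le_of_initial_le ha hL hDI hB h0 ht).trans_lt hB.2
  have htarget : s * r / (r ^ 2 - r + 1) < s * r := div_lt_self (by positivity) hX
  have hratioB : ratio (s / r) (s * r) (s * (r ^ 2 - r + 1) / r) = r := by
    rw [ratio, div_eq_iff (sub_pos.2 hB.2).ne']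
    field_simp
    ring
  have hratioT : ratio (s / r) (s * r) (s * r / (r ^ 2 - r + 1)) = (r ^ 4)⁻¹ * r := by
    rw [ratio, div_eq_iff (sub_pos.2 htarget).ne']
    have hX0 : r ^ 2 - r + 1 ≠ 0 := by positivity
    generalize hXdef : r ^ 2 - r + 1 = X at hX0
    field_simp
    linear_combination (r + 1) * hXdef
  rw [← ratio_le_ratio_iff hαβ (hbelow t ht) htarget, hratioT]
  calc ratio (s / r) (s * r) (L t)
      ≤ exp (-(a * (s * r - s / r) * t)) * ratio (s / r) (s * r) (L 0) :=
        ratio_le_exp_mul_ratio hαβ.le hL hDI hbelow ht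
    _ ≤ exp (-(a * (s * r - s / r) * t)) * r := by
        gcongr
        exact ((ratio_le_ratio_iff hαβ (hbelow 0 self_mem_Ici) hB.2).2 h0).trans_eq hratioB
    _ ≤ (r ^ 4)⁻¹ * r := by
        gcongr
        rw [exp_neg]
        exact inv_anti₀ (by positivity) hexp

theorem stmt2_general (ϱ : ℝ) (hϱ : 1 < ϱ)
    (r : ℝ) (hr : r = ϱ + Real.sqrt (ϱ ^ 2 - 1))
    (tϱ : ℝ)
    (htϱ : tϱ = (1 / (2 * ϱ - 1 - r)) *
      Real.log ((r + 1 - 2 * ϱ) / (4 * ϱ * r * (ϱ - 1) + r + 1 - 2 * ϱ)))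
    (a b c : ℝ) (ha : 0 < a) (hc : 0 < c)
    (hϱdef : b / Real.sqrt (a * c) = ϱ)
    (L L' : ℝ → ℝ)
    (hderiv : ∀ t ∈ Set.Ici (0 : ℝ), HasDerivAt L (L' t) t)
    (hDI : ∀ t ∈ Set.Ici (0 : ℝ), L' t + 2 * b * L t ≤ c + a * (L t) ^ 2)
    (h0 : L 0 ≤ Real.sqrt (c / a) * (2 * ϱ - 1)) :
    ∀ t : ℝ, tϱ / Real.sqrt (a * c) ≤ t →
      L t ≤ Real.sqrt (c / a) * (1 / (2 * ϱ - 1)) := by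
  intro t ht
  have hr1 : 1 < r := hr ▸ one_lt_add_sqrt_sq_sub_one hϱ
  have hϱr : 2 * ϱ * r = r ^ 2 + 1 := hr ▸ two_mul_mul_add_sqrt_sq_sub_one (by nlinarith)
  set s := √(c / a) with hs_def
  have hs : 0 < s := sqrt_pos.2 (div_pos hc ha)
  have hsqrt : √(a * c) = a * s := by
    rw [show a * c = a ^ 2 * (c / a) by field_simp, sqrt_mul (sq_nonneg a), sqrt_sq ha.le]
  have hb : b = ϱ * (a * s) := by
    rw [← hϱdef, hsqrt]
    field_simp
  have hc' : c = a * s ^ 2 := by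
    rw [hs_def, sq_sqrt (div_pos hc ha).le]
    field_simp
  have hDI' : ∀ t ∈ Ici (0 : ℝ), L' t ≤ a * (L t - s / r) * (L t - s * r) := by
    intro t ht
    have hfactor : a * (L t - s / r) * (L t - s * r) = c + a * L t ^ 2 - 2 * b * L t := by
      rw [hb, hc']
      field_simp
      linear_combination L t * s * hϱr
    linarith [hDI t ht]
  have hτ : tRho r ≤ a * s * t := by
    rwa [← tRho_eq hr1 hϱr, ← htϱ, ← hsqrt, ← div_le_iff₀' (by positivity)]
  have ht0 : 0 ≤ t :=
    nonneg_of_mul_nonneg_right ((tRho_nonneg hr1).trans hτ) (by positivity)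
  refine le_of_pow_four_le_exp ha hs hr1 hϱr hderiv hDI' h0 ht0 ?_
  convert pow_four_le_exp_of_tRho_le hr1 hτ using 2
  ring

/-- With `r = ϱ + √(ϱ²-1)` and the explicit time
`tϱ = (1/(2ϱ-1-r))·log((r+1-2ϱ)/(4ϱr(ϱ-1)+r+1-2ϱ))`, every continuously
differentiable solution of (DI) with `b/√(ac) = ϱ` and `L 0 ≤ √(c/a)*(2ϱ-1)`
satisfies `L t ≤ √(c/a)*(1/(2ϱ-1))` for all `t ≥ tϱ/√(ac)`. -/
theorem stmt2 (ϱ : ℝ) (hϱ : 1 < ϱ)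
    (r : ℝ) (hr : r = ϱ + Real.sqrt (ϱ ^ 2 - 1))
    (tϱ : ℝ)
    (htϱ : tϱ = (1 / (2 * ϱ - 1 - r)) *
      Real.log ((r + 1 - 2 * ϱ) / (4 * ϱ * r * (ϱ - 1) + r + 1 - 2 * ϱ)))
    (a b c : ℝ) (ha : 0 < a) (hb : 0 < b) (hc : 0 < c)
    (hϱdef : b / Real.sqrt (a * c) = ϱ)
    (L L' : ℝ → ℝ)
    (hderiv : ∀ t ∈ Set.Ici (0 : ℝ), HasDerivAt L (L' t) t)
    (hcont : ContinuousOn L' (Set.Ici 0))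
    (hDI : ∀ t ∈ Set.Ici (0 : ℝ), L' t + 2 * b * L t ≤ c + a * (L t) ^ 2)
    (h0 : L 0 ≤ Real.sqrt (c / a) * (2 * ϱ - 1)) :
    ∀ t : ℝ, tϱ / Real.sqrt (a * c) ≤ t →
      L t ≤ Real.sqrt (c / a) * (1 / (2 * ϱ - 1)) :=
  stmt2_general ϱ hϱ r hr tϱ htϱ a b c ha hc hϱdef L L' hderiv hDI h0
end

section
/- Let c* > 0 and 0 < ε < 1/(2ω). (i) If Λ_ε ≤ c*/ε, then x² + y² ≤ 4c*/ε. (ii) If R ≥ 0 is such that x² + y² ≤ R² and moreover ε ≤ κ·c*/(2κ·R² + 4·F²), then Λ_ε ≤ c*/ε. -/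
/-!
Both parts come from two-sided bounds on `Λ_ε` in terms of `x² + y²`. Young's inequality
absorbs the coupling term, `|p| ≤ (2/κ)F² + y²/2`, and since `εω < 1/2` the mixed term obeys
`ε|q| ≤ xy/2 ≤ (x² + y²)/4`. Hence `(x² + y²)/4 ≤ Λ_ε ≤ (7/4)(x² + y²) + 4F²/κ`. The lower
bound gives (i); the upper bound with `x² + y² ≤ R²` gives (ii), because the smallness condition
on `ε` says exactly that `ε (2R² + 4F²/κ) ≤ c*`.
-/

lemma two_div_sqrt_mul_mul_le {κ : ℝ} (hκ : 0 < κ) (F y : ℝ) :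
    2 / Real.sqrt κ * F * y ≤ 2 / κ * F ^ 2 + y ^ 2 / 2 := by
  obtain ⟨s, hs, rfl⟩ : ∃ s, 0 < s ∧ κ = s ^ 2 :=
    ⟨Real.sqrt κ, Real.sqrt_pos.mpr hκ, (Real.sq_sqrt hκ.le).symm⟩
  rw [Real.sqrt_sq hs.le, ← sub_nonneg]
  have hgap :
      2 / s ^ 2 * F ^ 2 + y ^ 2 / 2 - 2 / s * F * y = (2 * F - s * y) ^ 2 / (2 * s ^ 2) := by
    field_simp
    ring
  rw [hgap]
  positivity

lemma mul_abs_le_of_abs_le_mul_mul {ε ω x y q : ℝ} (hε : 0 ≤ ε) (hεω : ε * ω ≤ 1 / 2)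
    (hx : 0 ≤ x) (hy : 0 ≤ y) (hq : |q| ≤ ω * x * y) :
    ε * |q| ≤ (x ^ 2 + y ^ 2) / 4 :=
  calc ε * |q| ≤ ε * ω * (x * y) := by rw [mul_assoc ε, ← mul_assoc ω]; gcongr
    _ ≤ 1 / 2 * (x * y) := by gcongr
    _ ≤ (x ^ 2 + y ^ 2) / 4 := by nlinarith [sq_nonneg (x - y)]

lemma two_mul_sq_add_le_div_of_le_div {κ ε c R F : ℝ} (hκ : 0 < κ) (hε : 0 < ε)
    (hεR : ε ≤ κ * c / (2 * κ * R ^ 2 + 4 * F ^ 2)) :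
    2 * R ^ 2 + 4 * F ^ 2 / κ ≤ c / ε := by
  have hD : 0 < 2 * κ * R ^ 2 + 4 * F ^ 2 := by
    refine (show 0 ≤ 2 * κ * R ^ 2 + 4 * F ^ 2 by positivity).lt_of_ne fun hD => ?_
    rw [← hD, div_zero] at hεR
    exact hε.not_ge hεR
  have hscaled : 2 * R ^ 2 + 4 * F ^ 2 / κ = (2 * κ * R ^ 2 + 4 * F ^ 2) / κ := by
    field_simp
  rw [hscaled, div_le_div_iff₀ hκ hε]
  rw [le_div_iff₀ hD] at hεR
  linarith

theorem stmt11_general (ω κ F x y p q : ℝ)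
    (hω : 1 ≤ ω) (hκ : 0 < κ) (hx : 0 ≤ x) (hy : 0 ≤ y)
    (hp : |p| ≤ (2 / Real.sqrt κ) * F * y) (hq : |q| ≤ ω * x * y)
    (Λ : ℝ → ℝ)
    (hΛ : ∀ ε : ℝ, Λ ε = x ^ 2 + y ^ 2 + p + (2 / κ) * F ^ 2 - ε * q)
    (cstar : ℝ)
    (ε : ℝ) (hε0 : 0 < ε) (hε1 : ε < 1 / (2 * ω)) :
    (Λ ε ≤ cstar / ε → x ^ 2 + y ^ 2 ≤ 4 * cstar / ε) ∧
    (∀ R : ℝ, 0 ≤ R → x ^ 2 + y ^ 2 ≤ R ^ 2 →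
      ε ≤ κ * cstar / (2 * κ * R ^ 2 + 4 * F ^ 2) → Λ ε ≤ cstar / ε) := by
  have hεω : ε * ω ≤ 1 / 2 := by
    rw [lt_div_iff₀ (by positivity)] at hε1
    linarith
  obtain ⟨hp_lower, hp_upper⟩ := abs_le.mp (hp.trans (two_div_sqrt_mul_mul_le hκ F y))
  have hεq : |ε * q| ≤ (x ^ 2 + y ^ 2) / 4 := by
    rw [abs_mul, abs_of_pos hε0]
    exact mul_abs_le_of_abs_le_mul_mul hε0.le hεω hx hy hq
  obtain ⟨hεq_lower, hεq_upper⟩ := abs_le.mp hεq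
  rw [hΛ]
  refine ⟨fun h => ?_, fun R _ hR hεR => ?_⟩
  · rw [mul_div_assoc]
    linarith [sq_nonneg x]
  · have hsmall : 2 * R ^ 2 + 4 * F ^ 2 / κ ≤ cstar / ε :=
      two_mul_sq_add_le_div_of_le_div hκ hε0 hεR
    linarith [sq_nonneg x, sq_nonneg R, show 4 * F ^ 2 / κ = 2 * (2 / κ * F ^ 2) by ring]

/-- (i) If `Λ_ε ≤ c*/ε` then `x² + y² ≤ 4c*/ε`; (ii) if
`x² + y² ≤ R²` and `ε ≤ κc*/(2κR² + 4F²)` then `Λ_ε ≤ c*/ε`. -/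
theorem stmt11 (ω κ F x y p q : ℝ)
    (hω : 1 ≤ ω) (hκ : 0 < κ) (hF : 0 ≤ F) (hx : 0 ≤ x) (hy : 0 ≤ y)
    (hp : |p| ≤ (2 / Real.sqrt κ) * F * y) (hq : |q| ≤ ω * x * y)
    (Λ : ℝ → ℝ)
    (hΛ : ∀ ε : ℝ, Λ ε = x ^ 2 + y ^ 2 + p + (2 / κ) * F ^ 2 - ε * q)
    (cstar : ℝ) (hcstar : 0 < cstar)
    (ε : ℝ) (hε0 : 0 < ε) (hε1 : ε < 1 / (2 * ω)) :
    (Λ ε ≤ cstar / ε → x ^ 2 + y ^ 2 ≤ 4 * cstar / ε) ∧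
    (∀ R : ℝ, 0 ≤ R → x ^ 2 + y ^ 2 ≤ R ^ 2 →
      ε ≤ κ * cstar / (2 * κ * R ^ 2 + 4 * F ^ 2) → Λ ε ≤ cstar / ε) :=
  stmt11_general ω κ F x y p q hω hκ hx hy hp hq Λ hΛ cstar ε hε0 hε1
end

section
/- Let c₁, c₂, c₃ > 0 and F > 0 be real numbers such that ϱ = c₁/(2√(c₂c₃)·F) > 1, and set c* = √(c₂/c₃)·(2ϱ−1)·F. Let ε > 0 and let L : [0,∞) → ℝ be continuously differentiable with L′(t) + ε·c₁·L(t) ≤ c₂·F² + c₃·ε²·L(t)² for every t ≥ 0. If L(0) ≤ c*/ε, then L(t) ≤ c*/ε for every t ≥ 0. -/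
/-- Invariance. With `ϱ = c₁/(2√(c₂c₃)F) > 1` and
`c* = √(c₂/c₃)(2ϱ-1)F`, any continuously differentiable `L` satisfying
`L' + εc₁L ≤ c₂F² + c₃ε²L²` on `[0,∞)` with `L 0 ≤ c*/ε` stays `≤ c*/ε`. -/
theorem stmt13 (c₁ c₂ c₃ F : ℝ) (hc₁ : 0 < c₁) (hc₂ : 0 < c₂) (hc₃ : 0 < c₃) (hF : 0 < F)
    (ϱ : ℝ) (hϱdef : ϱ = c₁ / (2 * Real.sqrt (c₂ * c₃) * F)) (hϱ : 1 < ϱ)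
    (cstar : ℝ) (hcstar : cstar = Real.sqrt (c₂ / c₃) * (2 * ϱ - 1) * F)
    (ε : ℝ) (hε : 0 < ε)
    (L L' : ℝ → ℝ)
    (hderiv : ∀ t ∈ Set.Ici (0 : ℝ), HasDerivAt L (L' t) t)
    (hcont : ContinuousOn L' (Set.Ici 0))
    (hDI : ∀ t ∈ Set.Ici (0 : ℝ),
      L' t + ε * c₁ * L t ≤ c₂ * F ^ 2 + c₃ * ε ^ 2 * (L t) ^ 2)
    (h0 : L 0 ≤ cstar / ε) :
    ∀ t ∈ Set.Ici (0 : ℝ), L t ≤ cstar / ε := by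
  set a := Real.sqrt (c₂ * c₃) with ha
  set b := Real.sqrt (c₂ / c₃) with hb
  have hapos : 0 < a := Real.sqrt_pos.2 (by positivity)
  have hbpos : 0 < b := Real.sqrt_pos.2 (by positivity)
  have hab : a * b = c₂ := by
    rw [ha, hb, ← Real.sqrt_mul (by positivity)]
    rw [show c₂ * c₃ * (c₂ / c₃) = c₂ ^ 2 by field_simp]
    exact Real.sqrt_sq hc₂.le
  have hb2 : c₃ * b ^ 2 = c₂ := by
    rw [hb, Real.sq_sqrt (by positivity)]; field_simp
  have hc1 : c₁ = 2 * a * F * ϱ := by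
    rw [hϱdef]; field_simp
  -- the key boundary estimate
  have hkey : ∀ x ∈ Set.Ici (0 : ℝ), L x = cstar / ε → L' x < 0 := by
    intro x hx hLx
    have h := hDI x hx
    rw [hLx] at h
    have e1 : ε * c₁ * (cstar / ε) = c₁ * cstar := by field_simp
    have e2 : c₃ * ε ^ 2 * (cstar / ε) ^ 2 = c₃ * cstar ^ 2 := by
      field_simp
    have hq : c₂ * F ^ 2 + c₃ * ε ^ 2 * (cstar / ε) ^ 2 - ε * c₁ * (cstar / ε)
        = 2 * c₂ * F ^ 2 * (1 - ϱ) := by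
      rw [e1, e2, hcstar, hc1]
      linear_combination ((2 * ϱ - 1) ^ 2 * F ^ 2) * hb2
        - (2 * ϱ * (2 * ϱ - 1) * F ^ 2) * hab
    nlinarith [mul_pos (mul_pos (mul_pos two_pos hc₂) (pow_pos hF 2)) (sub_pos.2 hϱ)]
  intro t ht
  have key := image_le_of_deriv_right_lt_deriv_boundary
    (f := L) (f' := L') (a := 0) (b := t) (B := fun _ => cstar / ε) (B' := fun _ => 0)
    (fun x hx => ((hderiv x hx.1).continuousAt).continuousWithinAt)
    (fun x hx => (hderiv x hx.1).hasDerivWithinAt)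
    h0 (fun x => hasDerivAt_const x _)
    (fun x hx hfx => hkey x hx.1 hfx)
  exact key ⟨ht, le_refl t⟩
end

section
/- Let c₁, c₂, c₃ > 0 and F > 0 be real numbers such that ϱ = c₁/(2√(c₂c₃)·F) > 1. Then there exists a time t_ϱ > 0, depending only on ϱ, with the following property: for every α > 0 and every continuously differentiable L : [0,∞) → ℝ with L′(t) + α·c₁·L(t) ≤ c₂·F² + c₃·α²·L(t)² for every t ≥ 0 and L(0) ≤ √(c₂/c₃)·(F/α)·(2ϱ−1), one has L(t) ≤ √(c₂/c₃)·(F/α)·(1/(2ϱ−1)) for every t ≥ t_ϱ/(α·√(c₂c₃)·F). -/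
/-!
Write the inequality as `L' ≤ q(L)` with `q(x) = mk + (m/k)x² - 2ϱmx`, and put `u = 2ϱ - 1`.
Since `q(x) + δ = (m/k)(x - k/u)(x + k/u - 2ϱk)` with `δ = 2mk(ϱ - 1)/u²`, the quadratic is at
most `-δ` on the band `[k/u, ku]`. So `L` can cross neither end of the band upwards, and inside
the band it decreases at rate at least `δ`; starting below `ku` it is therefore below `k/u` after
time `(ku - k/u)/δ = 2ϱu/m`, and stays there.
-/

lemma le_of_le_of_deriv_neg_at_level {L L' : ℝ → ℝ} {C t₀ t : ℝ}
    (hL : ∀ s, t₀ ≤ s → HasDerivAt L (L' s) s) (hC : ∀ s, t₀ ≤ s → L s = C → L' s < 0)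
    (h₀ : L t₀ ≤ C) (ht : t₀ ≤ t) : L t ≤ C :=
  image_le_of_deriv_right_lt_deriv_boundary' (B := fun _ ↦ C) (B' := 0)
    (fun s hs ↦ (hL s hs.1).continuousAt.continuousWithinAt)
    (fun s hs ↦ (hL s hs.1).hasDerivWithinAt) h₀ continuousOn_const
    (fun _ _ ↦ hasDerivWithinAt_const _ _ _) (fun s hs ↦ hC s hs.1) ⟨ht, le_rfl⟩

lemma le_of_deriv_le_neg_on_band {L L' : ℝ → ℝ} {M B δ t : ℝ} (hδ : 0 < δ) (hMB : M ≤ B)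
    (hL : ∀ s, 0 ≤ s → HasDerivAt L (L' s) s)
    (hband : ∀ s, 0 ≤ s → M ≤ L s → L s ≤ B → L' s ≤ -δ)
    (h₀ : L 0 ≤ B) (ht : (B - M) / δ ≤ t) : L t ≤ M := by
  set T := (B - M) / δ
  have hT : 0 ≤ T := div_nonneg (sub_nonneg.2 hMB) hδ.le
  have hLB : ∀ s, 0 ≤ s → L s ≤ B := fun s hs ↦
    le_of_le_of_deriv_neg_at_level hL
      (fun s hs hsB ↦ (hband s hs (hsB ▸ hMB) hsB.le).trans_lt (neg_neg_of_pos hδ)) h₀ hs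
  obtain ⟨t₁, ht₁, ht₁T, hLt₁⟩ : ∃ t₁, 0 ≤ t₁ ∧ t₁ ≤ T ∧ L t₁ ≤ M := by
    by_contra! habove
    have hdecr : L T ≤ L 0 - δ * T :=
      image_le_of_deriv_right_le_deriv_boundary (B := fun s ↦ L 0 - δ * s) (B' := fun _ ↦ -δ)
        (fun s hs ↦ (hL s hs.1).continuousAt.continuousWithinAt)
        (fun s hs ↦ (hL s hs.1).hasDerivWithinAt) (by simp) (by fun_prop)
        (fun s _ ↦ by simpa using ((hasDerivAt_id s).const_mul δ).const_sub (L 0) |>.hasDerivWithinAt)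
        (fun s hs ↦ hband s hs.1 (habove s hs.1 hs.2.le).le (hLB s hs.1))
        ⟨hT, le_rfl⟩
    have hδT : δ * T = B - M := mul_div_cancel₀ _ hδ.ne'
    exact (habove T hT le_rfl).not_ge (by linarith)
  exact le_of_le_of_deriv_neg_at_level (fun s hs ↦ hL s (ht₁.trans hs))
    (fun s hs hsM ↦ (hband s (ht₁.trans hs) hsM.ge (hsM ▸ hMB)).trans_lt (neg_neg_of_pos hδ))
    hLt₁ (ht₁T.trans ht)

lemma quadratic_le_neg_on_band {k m ϱ x : ℝ} (hk : 0 < k) (hm : 0 < m) (hϱ : 1 < ϱ)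
    (hxM : k / (2 * ϱ - 1) ≤ x) (hxB : x ≤ k * (2 * ϱ - 1)) :
    m * k + m / k * x ^ 2 - 2 * ϱ * m * x ≤ -(2 * m * k * (ϱ - 1) / (2 * ϱ - 1) ^ 2) := by
  set u := 2 * ϱ - 1
  have hu : 1 < u := by linarith
  have hfactor : m * k + m / k * x ^ 2 - 2 * ϱ * m * x + 2 * m * k * (ϱ - 1) / u ^ 2
      = m / k * (x - k / u) * (x + k / u - (u + 1) * k) := by
    rw [show 2 * ϱ = u + 1 by ring]
    field_simp
    ring
  have hright : x + k / u - (u + 1) * k ≤ 0 := by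
    have : k / u ≤ k := div_le_self hk.le hu.le
    nlinarith
  have : m / k * (x - k / u) * (x + k / u - (u + 1) * k) ≤ 0 :=
    mul_nonpos_of_nonneg_of_nonpos (mul_nonneg (by positivity) (sub_nonneg.2 hxM)) hright
  linarith

-- In the form `L' + 2bL ≤ c + aL²` of the paper: `k = √(c/a)`, `m = √(ac)`, `ϱ = b/√(ac)`.
theorem le_of_deriv_add_le_quadratic {k m ϱ : ℝ} (hk : 0 < k) (hm : 0 < m) (hϱ : 1 < ϱ)
    {L L' : ℝ → ℝ} (hL : ∀ s, 0 ≤ s → HasDerivAt L (L' s) s)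
    (hineq : ∀ s, 0 ≤ s → L' s + 2 * ϱ * m * L s ≤ m * k + m / k * L s ^ 2)
    (h₀ : L 0 ≤ k * (2 * ϱ - 1)) {t : ℝ} (ht : 2 * ϱ * (2 * ϱ - 1) / m ≤ t) :
    L t ≤ k / (2 * ϱ - 1) := by
  have hu : 0 < 2 * ϱ - 1 := by linarith
  have hϱ₁ : 0 < ϱ - 1 := by linarith
  refine le_of_deriv_le_neg_on_band (δ := 2 * m * k * (ϱ - 1) / (2 * ϱ - 1) ^ 2)
    (by positivity) ?_ hL
    (fun s hs hM hB ↦ by linarith [hineq s hs, quadratic_le_neg_on_band hk hm hϱ hM hB]) h₀ ?_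
  · exact (div_le_self hk.le (by linarith)).trans (le_mul_of_one_le_right hk.le (by linarith))
  · convert ht using 1
    field_simp [hϱ₁.ne']
    ring

theorem stmt14_general (c₁ c₂ c₃ F : ℝ) (hc₂ : 0 < c₂) (hc₃ : 0 < c₃) (hF : 0 < F)
    (ϱ : ℝ) (hϱdef : ϱ = c₁ / (2 * Real.sqrt (c₂ * c₃) * F)) (hϱ : 1 < ϱ) :
    ∃ tϱ : ℝ, 0 < tϱ ∧
      ∀ α : ℝ, 0 < α →
        ∀ L L' : ℝ → ℝ,
          (∀ t ∈ Set.Ici (0 : ℝ), HasDerivAt L (L' t) t) →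
          ContinuousOn L' (Set.Ici 0) →
          (∀ t ∈ Set.Ici (0 : ℝ),
            L' t + α * c₁ * L t ≤ c₂ * F ^ 2 + c₃ * α ^ 2 * (L t) ^ 2) →
          L 0 ≤ Real.sqrt (c₂ / c₃) * (F / α) * (2 * ϱ - 1) →
          ∀ t : ℝ, tϱ / (α * Real.sqrt (c₂ * c₃) * F) ≤ t →
            L t ≤ Real.sqrt (c₂ / c₃) * (F / α) * (1 / (2 * ϱ - 1)) := by
  refine ⟨2 * ϱ * (2 * ϱ - 1), by nlinarith, fun α hα L L' hL _ hineq h₀ t ht ↦ ?_⟩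
  set k := √(c₂ / c₃) * (F / α)
  set m := α * √(c₂ * c₃) * F
  have hsqrt_mul : √(c₂ * c₃) * √(c₂ / c₃) = c₂ := by
    rw [← Real.sqrt_mul (by positivity), show c₂ * c₃ * (c₂ / c₃) = c₂ ^ 2 by field_simp,
      Real.sqrt_sq hc₂.le]
  have hsqrt_div : √(c₂ * c₃) / √(c₂ / c₃) = c₃ := by
    rw [← Real.sqrt_div' _ (by positivity), show c₂ * c₃ / (c₂ / c₃) = c₃ ^ 2 by field_simp,
      Real.sqrt_sq hc₃.le]
  have hmk : m * k = c₂ * F ^ 2 := by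
    rw [← hsqrt_mul]; simp only [m, k]; field_simp
  have hm_div_k : m / k = c₃ * α ^ 2 := by
    rw [← hsqrt_div]; simp only [m, k]; field_simp
  have hϱm : 2 * ϱ * m = α * c₁ := by
    rw [hϱdef]; simp only [m]; field_simp
  rw [mul_one_div]
  refine le_of_deriv_add_le_quadratic (by positivity) (by positivity) hϱ hL
    (fun s hs ↦ ?_) h₀ ht
  rw [hϱm, hmk, hm_div_k]
  exact hineq s hs

/-- Decay. With `ϱ = c₁/(2√(c₂c₃)F) > 1` there is `tϱ > 0`
depending only on `ϱ` such that for every `α > 0`, any continuously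
differentiable `L` with `L' + αc₁L ≤ c₂F² + c₃α²L²` on `[0,∞)` and
`L 0 ≤ √(c₂/c₃)(F/α)(2ϱ-1)` satisfies `L t ≤ √(c₂/c₃)(F/α)(1/(2ϱ-1))` for
every `t ≥ tϱ/(α√(c₂c₃)F)`. -/
theorem stmt14 (c₁ c₂ c₃ F : ℝ) (hc₁ : 0 < c₁) (hc₂ : 0 < c₂) (hc₃ : 0 < c₃) (hF : 0 < F)
    (ϱ : ℝ) (hϱdef : ϱ = c₁ / (2 * Real.sqrt (c₂ * c₃) * F)) (hϱ : 1 < ϱ) :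
    ∃ tϱ : ℝ, 0 < tϱ ∧
      ∀ α : ℝ, 0 < α →
        ∀ L L' : ℝ → ℝ,
          (∀ t ∈ Set.Ici (0 : ℝ), HasDerivAt L (L' t) t) →
          ContinuousOn L' (Set.Ici 0) →
          (∀ t ∈ Set.Ici (0 : ℝ),
            L' t + α * c₁ * L t ≤ c₂ * F ^ 2 + c₃ * α ^ 2 * (L t) ^ 2) →
          L 0 ≤ Real.sqrt (c₂ / c₃) * (F / α) * (2 * ϱ - 1) →
          ∀ t : ℝ, tϱ / (α * Real.sqrt (c₂ * c₃) * F) ≤ t →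
            L t ≤ Real.sqrt (c₂ / c₃) * (F / α) * (1 / (2 * ϱ - 1)) :=
  stmt14_general c₁ c₂ c₃ F hc₂ hc₃ hF ϱ hϱdef hϱ
end
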